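/- Let l₀,…,l₄ be ℂ-linearly independent linear forms in R. Let M be the 6×6 skew-symmetric matrix over R with rows (0, 0, 0, 0, l₀, l₁), (0, 0, 0, −l₀, 0, l₂), (0, 0, 0, −l₁, −l₂, 0), (0, l₀, l₁, 0, 0, 0), (−l₀, 0, l₂, 0, 0, 0), (−l₁, −l₂, 0, 0, 0, 0), and let S be the 6×2 matrix over R with first column (l₂, −l₁, l₀, 0, 0, 0) and second column (0, 0, 0, l₂, −l₁, l₀). Then: (i) the kernel of the R-module homomorphism R⁶ → R², v ↦ Sᵀv, equals the image of the R-module homomorphism R⁶ → R⁶, v ↦ Mv; (ii) the ideal of R generated by the fifteen 2×2 minors of S equals the sub-Pfaffian ideal I₄(M). -/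

import Mathlib

open MvPolynomial Matrix

noncomputable section

/-- The polynomial ring `R = ℂ[x₀,…,x₄]`. -/
abbrev Rp : Type := MvPolynomial (Fin 5) ℂ

/-- The sub-Pfaffian `q_{αβ}(N)` of a `6 × 6` matrix: for `α < β` it is
`N_{ij}N_{kl} − N_{ik}N_{jl} + N_{il}N_{jk}` where `i < j < k < l` are the elements of
`{0,…,5} ∖ {α,β}`. -/
def subPf {A : Type*} [CommRing A] (N : Matrix (Fin 6) (Fin 6) A) (α β : Fin 6) : A :=
  match (List.finRange 6).filter (fun i => decide (i ≠ α) && decide (i ≠ β)) with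
  | [i, j, k, m] => N i j * N k m - N i k * N j m + N i m * N j k
  | _ => 0

/-- The Pfaffian of a `6 × 6` skew-symmetric matrix. -/
def pf {A : Type*} [CommRing A] (N : Matrix (Fin 6) (Fin 6) A) : A :=
  N 0 1 * subPf N 0 1 - N 0 2 * subPf N 0 2 + N 0 3 * subPf N 0 3
    - N 0 4 * subPf N 0 4 + N 0 5 * subPf N 0 5

/-- The sub-Pfaffian ideal `I₄(N)`, generated by the fifteen sub-Pfaffians. -/
def pfIdeal4 {A : Type*} [CommRing A] (N : Matrix (Fin 6) (Fin 6) A) : Ideal A :=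
  Ideal.span {x | ∃ α β : Fin 6, α < β ∧ x = subPf N α β}

def ev (k : Fin 5) : Rp →ₐ[ℂ] Rp := aeval (Function.update X k 0)

@[simp] lemma ev_X_self (k : Fin 5) : ev k (X k) = 0 := by simp [ev]

lemma ev_X_ne (k i : Fin 5) (h : i ≠ k) : ev k (X i) = X i := by
  simp [ev, Function.update_of_ne h]

lemma dvd_sub_ev (k : Fin 5) (p : Rp) : X k ∣ p - ev k p := by
  induction p using MvPolynomial.induction_on with
  | C a => simp [ev]
  | add p q hp hq =>
      have := dvd_add hp hq
      rw [map_add]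
      convert this using 1; ring
  | mul_X p i hp =>
      rw [_root_.map_mul]
      by_cases h : i = k
      · subst h; rw [ev_X_self, mul_zero, sub_zero]; exact Dvd.intro_left p rfl
      · rw [ev_X_ne k i h]
        have : p * X i - ev k p * X i = (p - ev k p) * X i := by ring
        rw [this]; exact hp.mul_right _

lemma koszul_X (p q r : Rp) (h : X 2 * p - X 1 * q + X 0 * r = 0) :
    ∃ d p' q', p = X 1 * d + X 0 * p' ∧ q = X 2 * d + X 0 * q' ∧ r = X 1 * q' - X 2 * p' := by
  have h0 : X 2 * ev 0 p - X 1 * ev 0 q = 0 := by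
    have := congrArg (ev 0) h
    simpa [map_add, map_sub, _root_.map_mul, ev_X_ne 0 2 (by decide), ev_X_ne 0 1 (by decide)]
      using this
  have h1 : ev 1 (ev 0 p) = 0 := by
    have h2 : X 2 * ev 1 (ev 0 p) = 0 := by
      have := congrArg (ev 1) h0
      simpa [map_sub, _root_.map_mul, ev_X_ne 1 2 (by decide)] using this
    rcases mul_eq_zero.1 h2 with h' | h'
    · exact absurd h' (X_ne_zero 2)
    · exact h'
  obtain ⟨d, hd⟩ : X 1 ∣ ev 0 p := by
    have h2 := dvd_sub_ev 1 (ev 0 p)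
    rwa [h1, sub_zero] at h2
  have hq0 : ev 0 q = X 2 * d := by
    refine mul_left_cancel₀ (X_ne_zero 1) ?_
    linear_combination -h0 + X 2 * hd
  obtain ⟨p', hp'⟩ := dvd_sub_ev 0 p
  obtain ⟨q', hq'⟩ := dvd_sub_ev 0 q
  have hp : p = X 1 * d + X 0 * p' := by linear_combination hp' + hd
  have hq : q = X 2 * d + X 0 * q' := by linear_combination hq' + hq0
  refine ⟨d, p', q', hp, hq, ?_⟩
  have h3 : X 0 * (r - (X 1 * q' - X 2 * p')) = 0 := by
    linear_combination h - X 2 * hp + X 1 * hq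
  rcases mul_eq_zero.1 h3 with h' | h'
  · exact absurd h' (X_ne_zero 0)
  · exact sub_eq_zero.1 h'

lemma single_of_sum_one (m : Fin 5 →₀ ℕ) (hm : m 0 + m 1 + m 2 + m 3 + m 4 = 1) :
    ∃ j : Fin 5, Finsupp.single j 1 = m := by
  have : (m 0 = 1 ∧ m 1 = 0 ∧ m 2 = 0 ∧ m 3 = 0 ∧ m 4 = 0) ∨
         (m 1 = 1 ∧ m 0 = 0 ∧ m 2 = 0 ∧ m 3 = 0 ∧ m 4 = 0) ∨
         (m 2 = 1 ∧ m 0 = 0 ∧ m 1 = 0 ∧ m 3 = 0 ∧ m 4 = 0) ∨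
         (m 3 = 1 ∧ m 0 = 0 ∧ m 1 = 0 ∧ m 2 = 0 ∧ m 4 = 0) ∨
         (m 4 = 1 ∧ m 0 = 0 ∧ m 1 = 0 ∧ m 2 = 0 ∧ m 3 = 0) := by omega
  rcases this with ⟨h1,h2,h3,h4,h5⟩ | ⟨h1,h2,h3,h4,h5⟩ | ⟨h1,h2,h3,h4,h5⟩ |
    ⟨h1,h2,h3,h4,h5⟩ | ⟨h1,h2,h3,h4,h5⟩
  · exact ⟨0, by ext i; fin_cases i <;> simp [Finsupp.single_apply, h1, h2, h3, h4, h5]⟩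
  · exact ⟨1, by ext i; fin_cases i <;> simp [Finsupp.single_apply, h1, h2, h3, h4, h5]⟩
  · exact ⟨2, by ext i; fin_cases i <;> simp [Finsupp.single_apply, h1, h2, h3, h4, h5]⟩
  · exact ⟨3, by ext i; fin_cases i <;> simp [Finsupp.single_apply, h1, h2, h3, h4, h5]⟩
  · exact ⟨4, by ext i; fin_cases i <;> simp [Finsupp.single_apply, h1, h2, h3, h4, h5]⟩

lemma deg_one_eq (p : Rp) (hp : p.IsHomogeneous 1) :
    p = ∑ j, C (coeff (Finsupp.single j 1) p) * X j := by
  ext m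
  rw [coeff_sum]
  simp only [coeff_C_mul, coeff_X']
  by_cases hm : ∃ j : Fin 5, Finsupp.single j 1 = m
  · obtain ⟨j, rfl⟩ := hm
    rw [Finset.sum_eq_single j]
    · simp
    · intro b _ hb
      rw [if_neg, mul_zero]
      intro hcontra
      rcases (Finsupp.single_eq_single_iff _ _ _ _).1 hcontra with ⟨h1, _⟩ | ⟨h1, _⟩
      · exact hb h1
      · exact absurd h1 one_ne_zero
    · simp
  · push_neg at hm
    have hz : coeff m p = 0 := by
      by_contra hc
      have hdeg := hp hc
      have hsum : m 0 + m 1 + m 2 + m 3 + m 4 = 1 := by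
        have h2 : (Finsupp.weight 1) m = ∑ i ∈ m.support, m i := by
          rw [Finsupp.weight_apply, Finsupp.sum]; simp
        have h3 : ∑ i ∈ m.support, m i = ∑ i : Fin 5, m i := by
          apply Finset.sum_subset (Finset.subset_univ _)
          intro x _ hx
          simpa using hx
        have := hdeg
        rw [h2, h3, Fin.sum_univ_five] at this
        exact this
      obtain ⟨j, hj⟩ := single_of_sum_one m hsum
      exact hm j hj
    rw [hz]; symm
    apply Finset.sum_eq_zero
    intro j _
    rw [if_neg (hm j), mul_zero]

def Amat (l : Fin 5 → Rp) : Matrix (Fin 5) (Fin 5) ℂ := fun i j => coeff (Finsupp.single j 1) (l i)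

lemma l_eq_sum (l : Fin 5 → Rp) (hl : ∀ i, (l i).IsHomogeneous 1) (i : Fin 5) :
    l i = ∑ j, C (Amat l i j) * X j := deg_one_eq _ (hl i)

lemma A_isUnit (l : Fin 5 → Rp) (hl : ∀ i, (l i).IsHomogeneous 1)
    (hind : LinearIndependent ℂ l) : IsUnit (Amat l) := by
  rw [← Matrix.vecMul_injective_iff_isUnit]
  intro c c' hcc
  simp only at hcc
  have key : ∀ c : Fin 5 → ℂ, ∑ i, c i • l i = ∑ j, C (Matrix.vecMul c (Amat l) j) * X j := by
    intro c
    calc ∑ i, c i • l i = ∑ i, ∑ j, C (c i * Amat l i j) * X j := by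
          refine Finset.sum_congr rfl fun i _ => ?_
          rw [l_eq_sum l hl i, Finset.smul_sum]
          refine Finset.sum_congr rfl fun j _ => ?_
          rw [C_mul, smul_eq_C_mul]; ring
      _ = ∑ j, ∑ i, C (c i * Amat l i j) * X j := Finset.sum_comm
      _ = ∑ j, C (Matrix.vecMul c (Amat l) j) * X j := by
          refine Finset.sum_congr rfl fun j _ => ?_
          rw [← Finset.sum_mul, ← map_sum, Matrix.vecMul, dotProduct]
  have h0 : ∑ i, (c - c') i • l i = 0 := by
    rw [key]
    have hd : Matrix.vecMul (c - c') (Amat l) = 0 := by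
      rw [Matrix.sub_vecMul, hcc, sub_self]
    rw [hd]
    simp
  have hall := Fintype.linearIndependent_iff.1 hind (c - c') h0
  funext i
  have hi := hall i
  simpa [sub_eq_zero] using hi

def Bmat (l : Fin 5 → Rp) : Matrix (Fin 5) (Fin 5) ℂ := (Amat l)⁻¹

lemma sum_CX_comp (P Q : Matrix (Fin 5) (Fin 5) ℂ) (f : Rp →ₐ[ℂ] Rp)
    (hf : ∀ k, f (X k) = ∑ t, C (Q k t) * X t) (i : Fin 5) :
    f (∑ j, C (P i j) * X j) = ∑ t, C ((P * Q) i t) * X t := by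
  rw [map_sum]
  calc ∑ j, f (C (P i j) * X j) = ∑ j, ∑ t, C (P i j * Q j t) * X t := by
        refine Finset.sum_congr rfl fun j _ => ?_
        rw [_root_.map_mul, algHom_C, hf, Finset.mul_sum]
        refine Finset.sum_congr rfl fun t _ => ?_
        rw [C_mul, MvPolynomial.algebraMap_eq]; ring
    _ = ∑ t, C ((P * Q) i t) * X t := by
        rw [Finset.sum_comm]
        refine Finset.sum_congr rfl fun t _ => ?_
        rw [← Finset.sum_mul, ← map_sum, Matrix.mul_apply]

lemma sum_one_CX (i : Fin 5) : ∑ t, C ((1 : Matrix (Fin 5) (Fin 5) ℂ) i t) * X t = (X i : Rp) := by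
  rw [Finset.sum_eq_single i]
  · simp [Matrix.one_apply]
  · intro b _ hb; simp [Matrix.one_apply, Ne.symm hb]
  · simp

def χa (l : Fin 5 → Rp) : Rp →ₐ[ℂ] Rp := aeval (fun j => ∑ k, C (Bmat l j k) * X k)

lemma χa_X (l : Fin 5 → Rp) (j : Fin 5) : χa l (X j) = ∑ k, C (Bmat l j k) * X k := by simp [χa]

lemma χa_l (l : Fin 5 → Rp) (hl : ∀ i, (l i).IsHomogeneous 1) (hind : LinearIndependent ℂ l)
    (i : Fin 5) : χa l (l i) = X i := by
  rw [l_eq_sum l hl i, sum_CX_comp (Amat l) (Bmat l) (χa l) (χa_X l) i]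
  have hAB : Amat l * Bmat l = 1 :=
    Matrix.mul_nonsing_inv _ ((Matrix.isUnit_iff_isUnit_det _).1 (A_isUnit l hl hind))
  rw [hAB, sum_one_CX]

lemma ψa_χX (l : Fin 5 → Rp) (hl : ∀ i, (l i).IsHomogeneous 1) (hind : LinearIndependent ℂ l)
    (j : Fin 5) : aeval l (χa l (X j)) = X j := by
  rw [χa_X]
  have hk : ∀ k, (aeval l : Rp →ₐ[ℂ] Rp) (X k) = ∑ t, C (Amat l k t) * X t := by
    intro k; rw [aeval_X]; exact l_eq_sum l hl k
  rw [sum_CX_comp (Bmat l) (Amat l) (aeval l) hk j]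
  have hBA : Bmat l * Amat l = 1 :=
    Matrix.nonsing_inv_mul _ ((Matrix.isUnit_iff_isUnit_det _).1 (A_isUnit l hl hind))
  rw [hBA, sum_one_CX]

def eAuto (l : Fin 5 → Rp) (hl : ∀ i, (l i).IsHomogeneous 1) (hind : LinearIndependent ℂ l) :
    Rp ≃ₐ[ℂ] Rp :=
  AlgEquiv.ofAlgHom (aeval l) (χa l)
    (MvPolynomial.algHom_ext fun j => by simpa using ψa_χX l hl hind j)
    (MvPolynomial.algHom_ext fun i => by simpa using χa_l l hl hind i)

lemma eAuto_X (l : Fin 5 → Rp) (hl : ∀ i, (l i).IsHomogeneous 1) (hind : LinearIndependent ℂ l)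
    (i : Fin 5) : eAuto l hl hind (X i) = l i := by
  simp [eAuto]

lemma eAuto_symm_l (l : Fin 5 → Rp) (hl : ∀ i, (l i).IsHomogeneous 1)
    (hind : LinearIndependent ℂ l) (i : Fin 5) : (eAuto l hl hind).symm (l i) = X i := by
  rw [← eAuto_X l hl hind i, AlgEquiv.symm_apply_apply]

lemma koszul_l (l : Fin 5 → Rp) (hl : ∀ i, (l i).IsHomogeneous 1)
    (hind : LinearIndependent ℂ l) (p q r : Rp) (h : l 2 * p - l 1 * q + l 0 * r = 0) :
    ∃ d p' q', p = l 1 * d + l 0 * p' ∧ q = l 2 * d + l 0 * q' ∧ r = l 1 * q' - l 2 * p' := by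
  set e := eAuto l hl hind with he
  have h' : X 2 * e.symm p - X 1 * e.symm q + X 0 * e.symm r = 0 := by
    have hc := congrArg e.symm h
    simpa [map_add, map_sub, _root_.map_mul, eAuto_symm_l l hl hind, he] using hc
  obtain ⟨d0, p0, q0, h1, h2, h3⟩ := koszul_X _ _ _ h'
  refine ⟨e d0, e p0, e q0, ?_, ?_, ?_⟩
  · have hc := congrArg e h1
    simpa [map_add, _root_.map_mul, eAuto_X l hl hind, he] using hc
  · have hc := congrArg e h2
    simpa [map_add, _root_.map_mul, eAuto_X l hl hind, he] using hc
  · have hc := congrArg e h3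
    simpa [map_sub, _root_.map_mul, eAuto_X l hl hind, he] using hc

lemma subPf_01 {A : Type*} [CommRing A] (N : Matrix (Fin 6) (Fin 6) A) :
    subPf N 0 1 = N 2 3 * N 4 5 - N 2 4 * N 3 5 + N 2 5 * N 3 4 := rfl
lemma subPf_02 {A : Type*} [CommRing A] (N : Matrix (Fin 6) (Fin 6) A) :
    subPf N 0 2 = N 1 3 * N 4 5 - N 1 4 * N 3 5 + N 1 5 * N 3 4 := rfl
lemma subPf_03 {A : Type*} [CommRing A] (N : Matrix (Fin 6) (Fin 6) A) :
    subPf N 0 3 = N 1 2 * N 4 5 - N 1 4 * N 2 5 + N 1 5 * N 2 4 := rfl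
lemma subPf_04 {A : Type*} [CommRing A] (N : Matrix (Fin 6) (Fin 6) A) :
    subPf N 0 4 = N 1 2 * N 3 5 - N 1 3 * N 2 5 + N 1 5 * N 2 3 := rfl
lemma subPf_05 {A : Type*} [CommRing A] (N : Matrix (Fin 6) (Fin 6) A) :
    subPf N 0 5 = N 1 2 * N 3 4 - N 1 3 * N 2 4 + N 1 4 * N 2 3 := rfl
lemma subPf_12 {A : Type*} [CommRing A] (N : Matrix (Fin 6) (Fin 6) A) :
    subPf N 1 2 = N 0 3 * N 4 5 - N 0 4 * N 3 5 + N 0 5 * N 3 4 := rfl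
lemma subPf_13 {A : Type*} [CommRing A] (N : Matrix (Fin 6) (Fin 6) A) :
    subPf N 1 3 = N 0 2 * N 4 5 - N 0 4 * N 2 5 + N 0 5 * N 2 4 := rfl
lemma subPf_14 {A : Type*} [CommRing A] (N : Matrix (Fin 6) (Fin 6) A) :
    subPf N 1 4 = N 0 2 * N 3 5 - N 0 3 * N 2 5 + N 0 5 * N 2 3 := rfl
lemma subPf_15 {A : Type*} [CommRing A] (N : Matrix (Fin 6) (Fin 6) A) :
    subPf N 1 5 = N 0 2 * N 3 4 - N 0 3 * N 2 4 + N 0 4 * N 2 3 := rfl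
lemma subPf_23 {A : Type*} [CommRing A] (N : Matrix (Fin 6) (Fin 6) A) :
    subPf N 2 3 = N 0 1 * N 4 5 - N 0 4 * N 1 5 + N 0 5 * N 1 4 := rfl
lemma subPf_24 {A : Type*} [CommRing A] (N : Matrix (Fin 6) (Fin 6) A) :
    subPf N 2 4 = N 0 1 * N 3 5 - N 0 3 * N 1 5 + N 0 5 * N 1 3 := rfl
lemma subPf_25 {A : Type*} [CommRing A] (N : Matrix (Fin 6) (Fin 6) A) :
    subPf N 2 5 = N 0 1 * N 3 4 - N 0 3 * N 1 4 + N 0 4 * N 1 3 := rfl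
lemma subPf_34 {A : Type*} [CommRing A] (N : Matrix (Fin 6) (Fin 6) A) :
    subPf N 3 4 = N 0 1 * N 2 5 - N 0 2 * N 1 5 + N 0 5 * N 1 2 := rfl
lemma subPf_35 {A : Type*} [CommRing A] (N : Matrix (Fin 6) (Fin 6) A) :
    subPf N 3 5 = N 0 1 * N 2 4 - N 0 2 * N 1 4 + N 0 4 * N 1 2 := rfl
lemma subPf_45 {A : Type*} [CommRing A] (N : Matrix (Fin 6) (Fin 6) A) :
    subPf N 4 5 = N 0 1 * N 2 3 - N 0 2 * N 1 3 + N 0 3 * N 1 2 := rfl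

lemma mem_of_eq {A : Type*} [CommRing A] {I : Ideal A} {x y : A} (h : y ∈ I) (e : x = y) :
    x ∈ I := e ▸ h
lemma mem_of_eq_neg {A : Type*} [CommRing A] {I : Ideal A} {x y : A} (h : y ∈ I) (e : x = -y) :
    x ∈ I := e ▸ I.neg_mem h

@[simp] lemma cval5 {α : Type*} (x : α) (u : Fin 5 → α) : Matrix.vecCons x u 5 = u 4 := rfl
@[simp] lemma cval4 {α : Type*} (x : α) (u : Fin 5 → α) : Matrix.vecCons x u 4 = u 3 := rfl
@[simp] lemma cval3 {α : Type*} (x : α) (u : Fin 5 → α) : Matrix.vecCons x u 3 = u 2 := rfl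
@[simp] lemma cval2 {α : Type*} (x : α) (u : Fin 5 → α) : Matrix.vecCons x u 2 = u 1 := rfl


lemma part_i
    (l : Fin 5 → Rp) (hl : ∀ i, (l i).IsHomogeneous 1) (hind : LinearIndependent ℂ l)
    (M : Matrix (Fin 6) (Fin 6) Rp)
    (hM : M = !![0, 0, 0, 0, l 0, l 1;
                 0, 0, 0, -l 0, 0, l 2;
                 0, 0, 0, -l 1, -l 2, 0;
                 0, l 0, l 1, 0, 0, 0;
                 -l 0, 0, l 2, 0, 0, 0;
                 -l 1, -l 2, 0, 0, 0, 0])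
    (S : Matrix (Fin 6) (Fin 2) Rp)
    (hS : S = !![l 2, 0;
                 -l 1, 0;
                 l 0, 0;
                 0, l 2;
                 0, -l 1;
                 0, l 0]) :
    LinearMap.ker (Matrix.mulVecLin Sᵀ) = LinearMap.range (Matrix.mulVecLin M) := by
  subst hM hS
  ext v
  simp only [LinearMap.mem_ker, LinearMap.mem_range, Matrix.mulVecLin_apply]
  constructor
  · intro hv
    have e1 : l 2 * v 0 - l 1 * v 1 + l 0 * v 2 = 0 := by
      have hc := congrFun hv 0
      simp [Matrix.mulVec, dotProduct, Fin.sum_univ_six, Matrix.vecHead,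
        Matrix.vecTail] at hc
      linear_combination hc
    have e2 : l 2 * v 3 - l 1 * v 4 + l 0 * v 5 = 0 := by
      have hc := congrFun hv 1
      simp [Matrix.mulVec, dotProduct, Fin.sum_univ_six, Matrix.vecHead,
        Matrix.vecTail] at hc
      linear_combination hc
    obtain ⟨d1, p1, q1, hp1, hq1, hr1⟩ := koszul_l l hl hind _ _ _ e1
    obtain ⟨d2, p2, q2, hp2, hq2, hr2⟩ := koszul_l l hl hind _ _ _ e2
    refine ⟨![-q2, p2, d2, -q1, p1, d1], ?_⟩
    funext i
    fin_cases i <;>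
      simp [Matrix.mulVec, dotProduct, Fin.sum_univ_six, Matrix.vecHead, Matrix.vecTail]
    · linear_combination -hp1
    · linear_combination -hq1
    · linear_combination -hr1
    · linear_combination -hp2
    · linear_combination -hq2
    · linear_combination -hr2
  · rintro ⟨u, rfl⟩
    funext i
    fin_cases i <;>
      simp [Matrix.mulVec, dotProduct, Fin.sum_univ_six, Matrix.vecHead,
        Matrix.vecTail] <;> ring


lemma part_ii
    (l : Fin 5 → Rp) (hl : ∀ i, (l i).IsHomogeneous 1) (hind : LinearIndependent ℂ l)
    (M : Matrix (Fin 6) (Fin 6) Rp)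
    (hM : M = !![0, 0, 0, 0, l 0, l 1;
                 0, 0, 0, -l 0, 0, l 2;
                 0, 0, 0, -l 1, -l 2, 0;
                 0, l 0, l 1, 0, 0, 0;
                 -l 0, 0, l 2, 0, 0, 0;
                 -l 1, -l 2, 0, 0, 0, 0])
    (S : Matrix (Fin 6) (Fin 2) Rp)
    (hS : S = !![l 2, 0;
                 -l 1, 0;
                 l 0, 0;
                 0, l 2;
                 0, -l 1;
                 0, l 0]) :
    Ideal.span {x | ∃ i j : Fin 6, i < j ∧ x = S i 0 * S j 1 - S i 1 * S j 0}
      = pfIdeal4 M := by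
  subst hM hS
  apply le_antisymm
  · rw [Ideal.span_le]
    rintro x ⟨i, j, hij, rfl⟩
    fin_cases i <;> fin_cases j <;> first
      | exact absurd hij (by decide)
      | skip
    · exact mem_of_eq (Ideal.zero_mem _) (by simp [Matrix.vecHead, Matrix.vecTail])
    · exact mem_of_eq (Ideal.zero_mem _) (by simp [Matrix.vecHead, Matrix.vecTail])
    · exact mem_of_eq_neg (Ideal.subset_span ⟨0, 3, by decide, rfl⟩)
        (by simp [subPf_03, subPf_04, subPf_05, subPf_13, subPf_14, subPf_15, subPf_23, subPf_24, subPf_25, subPf_01, subPf_02, subPf_12, subPf_34, subPf_35, subPf_45, Matrix.vecHead, Matrix.vecTail]; try ring)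
    · exact mem_of_eq (Ideal.subset_span ⟨0, 4, by decide, rfl⟩)
        (by simp [subPf_03, subPf_04, subPf_05, subPf_13, subPf_14, subPf_15, subPf_23, subPf_24, subPf_25, subPf_01, subPf_02, subPf_12, subPf_34, subPf_35, subPf_45, Matrix.vecHead, Matrix.vecTail]; try ring)
    · exact mem_of_eq_neg (Ideal.subset_span ⟨0, 5, by decide, rfl⟩)
        (by simp [subPf_03, subPf_04, subPf_05, subPf_13, subPf_14, subPf_15, subPf_23, subPf_24, subPf_25, subPf_01, subPf_02, subPf_12, subPf_34, subPf_35, subPf_45, Matrix.vecHead, Matrix.vecTail]; try ring)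
    · exact mem_of_eq (Ideal.zero_mem _) (by simp [Matrix.vecHead, Matrix.vecTail])
    · exact mem_of_eq (Ideal.subset_span ⟨1, 3, by decide, rfl⟩)
        (by simp [subPf_03, subPf_04, subPf_05, subPf_13, subPf_14, subPf_15, subPf_23, subPf_24, subPf_25, subPf_01, subPf_02, subPf_12, subPf_34, subPf_35, subPf_45, Matrix.vecHead, Matrix.vecTail]; try ring)
    · exact mem_of_eq_neg (Ideal.subset_span ⟨1, 4, by decide, rfl⟩)
        (by simp [subPf_03, subPf_04, subPf_05, subPf_13, subPf_14, subPf_15, subPf_23, subPf_24, subPf_25, subPf_01, subPf_02, subPf_12, subPf_34, subPf_35, subPf_45, Matrix.vecHead, Matrix.vecTail]; try ring)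
    · exact mem_of_eq (Ideal.subset_span ⟨1, 5, by decide, rfl⟩)
        (by simp [subPf_03, subPf_04, subPf_05, subPf_13, subPf_14, subPf_15, subPf_23, subPf_24, subPf_25, subPf_01, subPf_02, subPf_12, subPf_34, subPf_35, subPf_45, Matrix.vecHead, Matrix.vecTail]; try ring)
    · exact mem_of_eq_neg (Ideal.subset_span ⟨2, 3, by decide, rfl⟩)
        (by simp [subPf_03, subPf_04, subPf_05, subPf_13, subPf_14, subPf_15, subPf_23, subPf_24, subPf_25, subPf_01, subPf_02, subPf_12, subPf_34, subPf_35, subPf_45, Matrix.vecHead, Matrix.vecTail]; try ring)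
    · exact mem_of_eq (Ideal.subset_span ⟨2, 4, by decide, rfl⟩)
        (by simp [subPf_03, subPf_04, subPf_05, subPf_13, subPf_14, subPf_15, subPf_23, subPf_24, subPf_25, subPf_01, subPf_02, subPf_12, subPf_34, subPf_35, subPf_45, Matrix.vecHead, Matrix.vecTail]; try ring)
    · exact mem_of_eq_neg (Ideal.subset_span ⟨2, 5, by decide, rfl⟩)
        (by simp [subPf_03, subPf_04, subPf_05, subPf_13, subPf_14, subPf_15, subPf_23, subPf_24, subPf_25, subPf_01, subPf_02, subPf_12, subPf_34, subPf_35, subPf_45, Matrix.vecHead, Matrix.vecTail]; try ring)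
    · exact mem_of_eq (Ideal.zero_mem _) (by simp [Matrix.vecHead, Matrix.vecTail])
    · exact mem_of_eq (Ideal.zero_mem _) (by simp [Matrix.vecHead, Matrix.vecTail])
    · exact mem_of_eq (Ideal.zero_mem _) (by simp [Matrix.vecHead, Matrix.vecTail])
  · rw [pfIdeal4, Ideal.span_le]
    rintro x ⟨a, b, hab, rfl⟩
    fin_cases a <;> fin_cases b <;> first
      | exact absurd hab (by decide)
      | skip
    · exact mem_of_eq (Ideal.zero_mem _) (by simp [subPf_03, subPf_04, subPf_05, subPf_13, subPf_14, subPf_15, subPf_23, subPf_24, subPf_25, subPf_01, subPf_02, subPf_12, subPf_34, subPf_35, subPf_45, Matrix.vecHead, Matrix.vecTail])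
    · exact mem_of_eq (Ideal.zero_mem _) (by simp [subPf_03, subPf_04, subPf_05, subPf_13, subPf_14, subPf_15, subPf_23, subPf_24, subPf_25, subPf_01, subPf_02, subPf_12, subPf_34, subPf_35, subPf_45, Matrix.vecHead, Matrix.vecTail])
    · exact mem_of_eq_neg (Ideal.subset_span ⟨0, 3, by decide, rfl⟩)
        (by simp [subPf_03, subPf_04, subPf_05, subPf_13, subPf_14, subPf_15, subPf_23, subPf_24, subPf_25, subPf_01, subPf_02, subPf_12, subPf_34, subPf_35, subPf_45, Matrix.vecHead, Matrix.vecTail]; try ring)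
    · exact mem_of_eq (Ideal.subset_span ⟨0, 4, by decide, rfl⟩)
        (by simp [subPf_03, subPf_04, subPf_05, subPf_13, subPf_14, subPf_15, subPf_23, subPf_24, subPf_25, subPf_01, subPf_02, subPf_12, subPf_34, subPf_35, subPf_45, Matrix.vecHead, Matrix.vecTail]; try ring)
    · exact mem_of_eq_neg (Ideal.subset_span ⟨0, 5, by decide, rfl⟩)
        (by simp [subPf_03, subPf_04, subPf_05, subPf_13, subPf_14, subPf_15, subPf_23, subPf_24, subPf_25, subPf_01, subPf_02, subPf_12, subPf_34, subPf_35, subPf_45, Matrix.vecHead, Matrix.vecTail]; try ring)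
    · exact mem_of_eq (Ideal.zero_mem _) (by simp [subPf_03, subPf_04, subPf_05, subPf_13, subPf_14, subPf_15, subPf_23, subPf_24, subPf_25, subPf_01, subPf_02, subPf_12, subPf_34, subPf_35, subPf_45, Matrix.vecHead, Matrix.vecTail])
    · exact mem_of_eq (Ideal.subset_span ⟨1, 3, by decide, rfl⟩)
        (by simp [subPf_03, subPf_04, subPf_05, subPf_13, subPf_14, subPf_15, subPf_23, subPf_24, subPf_25, subPf_01, subPf_02, subPf_12, subPf_34, subPf_35, subPf_45, Matrix.vecHead, Matrix.vecTail]; try ring)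
    · exact mem_of_eq_neg (Ideal.subset_span ⟨1, 4, by decide, rfl⟩)
        (by simp [subPf_03, subPf_04, subPf_05, subPf_13, subPf_14, subPf_15, subPf_23, subPf_24, subPf_25, subPf_01, subPf_02, subPf_12, subPf_34, subPf_35, subPf_45, Matrix.vecHead, Matrix.vecTail]; try ring)
    · exact mem_of_eq (Ideal.subset_span ⟨1, 5, by decide, rfl⟩)
        (by simp [subPf_03, subPf_04, subPf_05, subPf_13, subPf_14, subPf_15, subPf_23, subPf_24, subPf_25, subPf_01, subPf_02, subPf_12, subPf_34, subPf_35, subPf_45, Matrix.vecHead, Matrix.vecTail]; try ring)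
    · exact mem_of_eq_neg (Ideal.subset_span ⟨2, 3, by decide, rfl⟩)
        (by simp [subPf_03, subPf_04, subPf_05, subPf_13, subPf_14, subPf_15, subPf_23, subPf_24, subPf_25, subPf_01, subPf_02, subPf_12, subPf_34, subPf_35, subPf_45, Matrix.vecHead, Matrix.vecTail]; try ring)
    · exact mem_of_eq (Ideal.subset_span ⟨2, 4, by decide, rfl⟩)
        (by simp [subPf_03, subPf_04, subPf_05, subPf_13, subPf_14, subPf_15, subPf_23, subPf_24, subPf_25, subPf_01, subPf_02, subPf_12, subPf_34, subPf_35, subPf_45, Matrix.vecHead, Matrix.vecTail]; try ring)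
    · exact mem_of_eq_neg (Ideal.subset_span ⟨2, 5, by decide, rfl⟩)
        (by simp [subPf_03, subPf_04, subPf_05, subPf_13, subPf_14, subPf_15, subPf_23, subPf_24, subPf_25, subPf_01, subPf_02, subPf_12, subPf_34, subPf_35, subPf_45, Matrix.vecHead, Matrix.vecTail]; try ring)
    · exact mem_of_eq (Ideal.zero_mem _) (by simp [subPf_03, subPf_04, subPf_05, subPf_13, subPf_14, subPf_15, subPf_23, subPf_24, subPf_25, subPf_01, subPf_02, subPf_12, subPf_34, subPf_35, subPf_45, Matrix.vecHead, Matrix.vecTail])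
    · exact mem_of_eq (Ideal.zero_mem _) (by simp [subPf_03, subPf_04, subPf_05, subPf_13, subPf_14, subPf_15, subPf_23, subPf_24, subPf_25, subPf_01, subPf_02, subPf_12, subPf_34, subPf_35, subPf_45, Matrix.vecHead, Matrix.vecTail])
    · exact mem_of_eq (Ideal.zero_mem _) (by simp [subPf_03, subPf_04, subPf_05, subPf_13, subPf_14, subPf_15, subPf_23, subPf_24, subPf_25, subPf_01, subPf_02, subPf_12, subPf_34, subPf_35, subPf_45, Matrix.vecHead, Matrix.vecTail])


/-- Proposition 1.2, case (f). -/
theorem type_f_syzygy_and_minors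
    (l : Fin 5 → Rp) (hl : ∀ i, (l i).IsHomogeneous 1) (hind : LinearIndependent ℂ l)
    (M : Matrix (Fin 6) (Fin 6) Rp)
    (hM : M = !![0, 0, 0, 0, l 0, l 1;
                 0, 0, 0, -l 0, 0, l 2;
                 0, 0, 0, -l 1, -l 2, 0;
                 0, l 0, l 1, 0, 0, 0;
                 -l 0, 0, l 2, 0, 0, 0;
                 -l 1, -l 2, 0, 0, 0, 0])
    (S : Matrix (Fin 6) (Fin 2) Rp)
    (hS : S = !![l 2, 0;
                 -l 1, 0;
                 l 0, 0;
                 0, l 2;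
                 0, -l 1;
                 0, l 0]) :
    LinearMap.ker (Matrix.mulVecLin Sᵀ) = LinearMap.range (Matrix.mulVecLin M) ∧
    Ideal.span {x | ∃ i j : Fin 6, i < j ∧ x = S i 0 * S j 1 - S i 1 * S j 0}
      = pfIdeal4 M :=
  ⟨part_i l hl hind M hM S hS, part_ii l hl hind M hM S hS⟩
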